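/- Let K be an algebraically closed field of characteristic 2, λ, μ ∈ K ∖ {0,1}. The first Külshammer ideal of the standard algebra Λ₃'(μ) (relations α² = σγ, μβ² = γσ, γα = βγ, σβ = ασ, symmetrizing form Ψ'(α³)=1, Ψ'(β³)=μ⁻¹, zero on other basis elements) equals span{α² + √μ·β², α³, β³}, of codimension 3 in the 6-dimensional center; whereas the first Külshammer ideal of the nonstandard algebra Λ₃(λ) (relations α² = σγ + α³, λβ² = γσ, γα = βγ, σβ = ασ, form Ψ(α³)=Ψ(α²)=1, Ψ(β³)=λ⁻¹, zero otherwise) equals span{α², β², α³, β³}, of codimension 2 in its 6-dimensional center. Hence the centers admit no isomorphism carrying one Külshammer ideal onto the other. -/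

import Mathlib

/-!
Both algebras belong to the family `σγ = α² - εα³` (`ε = 0` for `Λ₃'`, `ε = 1` for `Λ₃`; the sign
is immaterial in characteristic `2`). Reading the relations as a rewriting system on paths gives
the multiplication table in the basis `e₁, e₂, α, β, σ, γ, α², ασ, β², γα, α³, β³`, from which one
reads off the centre `⟨1, α + β, α², β², α³, β³⟩` and the symmetry of `Ψ`.

For a trace `F` in characteristic `2` the map `x ↦ F (x²)` is additive, so
`F (x²) = ∑ xᵢ² F (bᵢ²)`. Applied to the traces `Ψ (z ·)`, `z` central, this shows that `x² ∈ K(A)`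
forces `x₀ = x₁ = 0`, `ε x₂ = 0` and `x₃² = t x₂²`, which puts the stated spans inside `T₁(A)^⊥`.
Conversely, testing `a ∈ T₁(A)^⊥` against the square-zero basis elements and, when `ε = 0`, against
`(α + √t β)² = σγ - γσ` cuts it down to those spans. They have dimensions `3` and `4`, so no
isomorphism of the centres carries one onto the other.
-/

open Module Submodule

section Traces

variable {K A : Type*} [Field K] [Ring A] [Algebra K A]

def commutatorSpan (K A : Type*) [Field K] [Ring A] [Algebra K A] : Submodule K A :=
  span K {x : A | ∃ u v : A, x = u * v - v * u}

/-- `T₁(A)^⊥` for the bilinear form `(a, b) ↦ Ψ (a * b)`. -/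
def kulshammerPerp (Ψ : A →ₗ[K] K) : Set A :=
  {a | ∀ x : A, x ^ 2 ∈ commutatorSpan K A → Ψ (a * x) = 0}

theorem map_eq_zero_of_mem_commutatorSpan {F : A →ₗ[K] K} (hF : ∀ u v, F (u * v) = F (v * u))
    {x : A} (hx : x ∈ commutatorSpan K A) : F x = 0 := by
  have hle : commutatorSpan K A ≤ LinearMap.ker F :=
    span_le.mpr (by rintro _ ⟨u, v, rfl⟩; simp [hF u v])
  exact hle hx

theorem map_mul_eq_sum_right {ι : Type*} [Fintype ι] (b : Basis ι K A) (F : A →ₗ[K] K)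
    (x y : A) : F (x * y) = ∑ j, b.repr y j * F (x * b j) := by
  conv_lhs => rw [← b.sum_repr y]
  simp only [Finset.mul_sum, mul_smul_comm, map_sum, map_smul, smul_eq_mul]

theorem map_mul_eq_sum_left {ι : Type*} [Fintype ι] (b : Basis ι K A) (F : A →ₗ[K] K)
    (x y : A) : F (y * x) = ∑ j, b.repr y j * F (b j * x) := by
  conv_lhs => rw [← b.sum_repr y]
  simp only [Finset.sum_mul, smul_mul_assoc, map_sum, map_smul, smul_eq_mul]

theorem map_mul_comm_of_basis {ι : Type*} [Fintype ι] (b : Basis ι K A) {F : A →ₗ[K] K}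
    (h : ∀ i j, F (b i * b j) = F (b j * b i)) (u v : A) : F (u * v) = F (v * u) := by
  rw [map_mul_eq_sum_right b, map_mul_eq_sum_left b]
  refine Finset.sum_congr rfl fun j _ => ?_
  rw [map_mul_eq_sum_left b, map_mul_eq_sum_right b]
  simp only [h]

theorem map_mul_central_mul_comm {F : A →ₗ[K] K} (hF : ∀ u v, F (u * v) = F (v * u)) {z : A}
    (hz : z ∈ Subalgebra.center K A) (u v : A) : F (z * u * v) = F (z * v * u) := by
  rw [hF, ← mul_assoc, ← (Subalgebra.mem_center_iff.mp hz v)]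

/-- In characteristic `2` the cross terms `F (u * v) + F (v * u) = 2 F (u * v)` of a trace vanish,
so `x ↦ F (x ^ 2)` is additive. -/
theorem map_sq_eq_sum [CharP K 2] {ι : Type*} [Fintype ι] (b : Basis ι K A) {F : A →ₗ[K] K}
    (hF : ∀ u v, F (u * v) = F (v * u)) (x : A) :
    F (x ^ 2) = ∑ i, b.repr x i ^ 2 * F (b i ^ 2) := by
  let q : A →+ K :=
    { toFun := fun y => F (y ^ 2)
      map_zero' := by simp
      map_add' := fun u v => by
        simp only [sq, add_mul, mul_add, map_add, hF v u]
        linear_combination F (u * v) * CharTwo.two_eq_zero (R := K) }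
  calc F (x ^ 2) = q (∑ i, b.repr x i • b i) := by rw [b.sum_repr]; rfl
    _ = _ := by simp only [map_sum]; simp [q, smul_pow]

theorem mem_center_of_basis_mul_comm {ι : Type*} [Fintype ι] (b : Basis ι K A) {z : A}
    (h : ∀ i, b i * z = z * b i) : z ∈ Subalgebra.center K A := by
  refine Subalgebra.mem_center_iff.mpr fun y => ?_
  rw [← b.sum_repr y, Finset.sum_mul, Finset.mul_sum]
  simp [h]

theorem finrank_span_range_of_repr_eq_ite {ι : Type*} {n : ℕ} (b : Basis ι K A) {v : Fin n → A}
    (s : Fin n → ι) (h : ∀ i j, b.repr (v i) (s j) = if i = j then 1 else 0) :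
    finrank K (span K (Set.range v)) = n := by
  have hv : LinearIndependent K v := Fintype.linearIndependent_iff.mpr fun g hg j => by
    simpa [h] using congrArg (fun x => b.repr x (s j)) hg
  rw [finrank_span_eq_card hv, Fintype.card_fin]

theorem span_subset_kulshammerPerp {Ψ : A →ₗ[K] K} {s : Set A}
    (h : ∀ a ∈ s, ∀ x : A, x ^ 2 ∈ commutatorSpan K A → Ψ (a * x) = 0) :
    (span K s : Set A) ⊆ kulshammerPerp Ψ := by
  intro a ha x hx
  have hle : span K s ≤ LinearMap.ker (Ψ ∘ₗ LinearMap.mulRight K x) :=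
    span_le.mpr fun a' ha' => h a' ha' x hx
  exact hle ha

theorem finrank_comap_val_eq {B : Subalgebra K A}
    {I : Submodule K A} (hI : I ≤ Subalgebra.toSubmodule B) :
    finrank K (I.comap B.val.toLinearMap) = finrank K I := by
  have h := (equivMapOfInjective B.val.toLinearMap Subtype.val_injective
    (I.comap B.val.toLinearMap)).finrank_eq
  rwa [map_comap_eq_of_le fun x hx => ⟨⟨x, hI hx⟩, rfl⟩] at h

end Traces

theorem finrank_eq_of_linearEquiv_of_le {K A A' : Type*} [Field K] [Ring A] [Algebra K A]
    [Ring A'] [Algebra K A'] {B : Subalgebra K A} {B' : Subalgebra K A'} (e : B ≃ₗ[K] B')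
    {I : Submodule K A} {I' : Submodule K A'} (hI : I ≤ Subalgebra.toSubmodule B)
    (hI' : I' ≤ Subalgebra.toSubmodule B') (he : ∀ z : B, (z : A) ∈ I ↔ (e z : A') ∈ I') :
    finrank K I = finrank K I' := by
  have hmap : (I.comap B.val.toLinearMap).map (e : B →ₗ[K] B') = I'.comap B'.val.toLinearMap := by
    ext z
    simp only [mem_map, mem_comap, AlgHom.toLinearMap_apply, Subalgebra.coe_val,
      LinearEquiv.coe_coe]
    exact ⟨fun ⟨y, hy, hyz⟩ => hyz ▸ (he y).mp hy,
      fun hz => ⟨e.symm z, (he _).mpr (by simpa using hz), by simp⟩⟩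
  rw [← finrank_comap_val_eq hI, ← finrank_comap_val_eq hI', ← hmap, LinearEquiv.finrank_map_eq]

theorem nilpotency_relations_of_ne_one {K A : Type*} [Field K] [Ring A] [Algebra K A]
    {α β σ γ : A} {μ : K} (hμ : μ ≠ 1) (r1 : α ^ 2 = σ * γ) (r2 : μ • β ^ 2 = γ * σ)
    (r3 : γ * α = β * γ) (r4 : σ * β = α * σ) :
    α ^ 2 * σ = 0 ∧ γ * α ^ 2 = 0 ∧ α ^ 4 = 0 := by
  have hσβ : σ * β ^ 2 = α ^ 2 * σ := by
    rw [sq, ← mul_assoc, r4, mul_assoc, r4, ← mul_assoc, ← sq]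
  have hβγ : β ^ 2 * γ = γ * α ^ 2 := by
    rw [sq, mul_assoc, ← r3, ← mul_assoc, ← r3, mul_assoc, ← sq]
  have h1 : (1 - μ) • (α ^ 2 * σ) = 0 := by
    rw [sub_smul, one_smul, sub_eq_zero]
    calc α ^ 2 * σ = σ * (γ * σ) := by rw [r1, mul_assoc]
      _ = μ • (α ^ 2 * σ) := by rw [← r2, mul_smul_comm, hσβ]
  have h2 : (1 - μ) • (γ * α ^ 2) = 0 := by
    rw [sub_smul, one_smul, sub_eq_zero]
    calc γ * α ^ 2 = γ * σ * γ := by rw [r1, mul_assoc]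
      _ = μ • (γ * α ^ 2) := by rw [← r2, smul_mul_assoc, hβγ]
  have hμ' : (1 - μ) ≠ 0 := sub_ne_zero.mpr hμ.symm
  have zσ := (smul_eq_zero.mp h1).resolve_left hμ'
  refine ⟨zσ, (smul_eq_zero.mp h2).resolve_left hμ', ?_⟩
  calc α ^ 4 = α ^ 2 * σ * γ := by rw [show 4 = 2 + 2 from rfl, pow_add, mul_assoc, ← r1]
    _ = 0 := by rw [zσ, zero_mul]

theorem mul_mul_eq_of_mul_eq {M : Type*} [Semigroup M] {x y w : M} (h : x * y = w) (z : M) :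
    x * (y * z) = w * z := by
  rw [← mul_assoc, h]

/-- The algebras `Λ₃(t)` (`ε = 1`) and `Λ₃'(t)` (`ε = 0`): the quiver with loops `α` at `e₁`, `β` at
`e₂` and arrows `σ` from `e₁` to `e₂`, `γ` back, with paths written left to right. When `ε = 0` and
`t ≠ 1` the last three relations follow from the others (`nilpotency_relations_of_ne_one`). -/
structure Lambda3Presentation (K : Type*) [Field K] (A : Type*) [Ring A] [Algebra K A] where
  e₁ : A
  e₂ : A
  α : A
  β : A
  σ : A
  γ : A
  t : K
  ε : K
  t_ne_zero : t ≠ 0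
  e₁_mul_e₁ : e₁ * e₁ = e₁
  e₂_mul_e₂ : e₂ * e₂ = e₂
  e₁_mul_e₂ : e₁ * e₂ = 0
  e₂_mul_e₁ : e₂ * e₁ = 0
  e₁_add_e₂ : e₁ + e₂ = 1
  e₁_mul_α : e₁ * α = α
  α_mul_e₁ : α * e₁ = α
  e₂_mul_β : e₂ * β = β
  β_mul_e₂ : β * e₂ = β
  e₁_mul_σ : e₁ * σ = σ
  σ_mul_e₂ : σ * e₂ = σ
  e₂_mul_γ : e₂ * γ = γ
  γ_mul_e₁ : γ * e₁ = γ
  σ_mul_γ : σ * γ = α ^ 2 - ε • α ^ 3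
  γ_mul_σ : γ * σ = t • β ^ 2
  γ_mul_α : γ * α = β * γ
  σ_mul_β : σ * β = α * σ
  α_pow_four : α ^ 4 = 0
  α_sq_mul_σ : α ^ 2 * σ = 0
  γ_mul_α_sq : γ * α ^ 2 = 0
  basis : Basis (Fin 12) K A
  basis_eq : ⇑basis = ![e₁, e₂, α, β, σ, γ, α ^ 2, α * σ, β ^ 2, γ * α, α ^ 3, β ^ 3]

namespace Lambda3Presentation

variable {K : Type*} [Field K] {A : Type*} [Ring A] [Algebra K A] (S : Lambda3Presentation K A)

theorem mul_eq_zero_of_e₁_e₂ {x y : A} (hx : x * S.e₁ = x) (hy : S.e₂ * y = y) : x * y = 0 := by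
  rw [← hx, ← hy, mul_assoc, ← mul_assoc S.e₁, S.e₁_mul_e₂, zero_mul, mul_zero]

theorem mul_eq_zero_of_e₂_e₁ {x y : A} (hx : x * S.e₂ = x) (hy : S.e₁ * y = y) : x * y = 0 := by
  rw [← hx, ← hy, mul_assoc, ← mul_assoc S.e₂, S.e₂_mul_e₁, zero_mul, mul_zero]

theorem mul_mul_eq_zero_of_e₁_e₂ {x y : A} (hx : x * S.e₁ = x) (hy : S.e₂ * y = y) (z : A) :
    x * (y * z) = 0 := by
  rw [mul_mul_eq_of_mul_eq (S.mul_eq_zero_of_e₁_e₂ hx hy), zero_mul]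

theorem mul_mul_eq_zero_of_e₂_e₁ {x y : A} (hx : x * S.e₂ = x) (hy : S.e₁ * y = y) (z : A) :
    x * (y * z) = 0 := by
  rw [mul_mul_eq_of_mul_eq (S.mul_eq_zero_of_e₂_e₁ hx hy), zero_mul]

theorem α_mul_σ : S.α * S.σ = S.σ * S.β := S.σ_mul_β.symm

theorem β_mul_γ : S.β * S.γ = S.γ * S.α := S.γ_mul_α.symm

theorem σ_mul_γ' : S.σ * S.γ = S.α * S.α - S.ε • (S.α * (S.α * S.α)) := by
  rw [S.σ_mul_γ]; noncomm_ring

theorem γ_mul_σ' : S.γ * S.σ = S.t • (S.β * S.β) := by rw [S.γ_mul_σ, sq]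

theorem σ_mul_β_mul_β (z : A) : S.σ * (S.β * (S.β * z)) = 0 := by
  rw [← mul_assoc, S.σ_mul_β, mul_assoc, ← mul_assoc S.σ, S.σ_mul_β, ← mul_assoc, ← mul_assoc,
    ← sq, S.α_sq_mul_σ, zero_mul]

theorem γ_mul_α_mul_α (z : A) : S.γ * (S.α * (S.α * z)) = 0 := by
  rw [← mul_assoc S.α, ← mul_assoc, ← sq, S.γ_mul_α_sq, zero_mul]

theorem α_mul_α_mul_α_mul_α (z : A) : S.α * (S.α * (S.α * (S.α * z))) = 0 := by
  rw [show S.α * (S.α * (S.α * (S.α * z))) = S.α ^ 4 * z by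
    simp only [pow_succ, pow_zero, one_mul, mul_assoc], S.α_pow_four, zero_mul]

theorem β_pow_four : S.β ^ 4 = 0 := by
  have h : S.t • S.β ^ 4 = 0 := by
    calc S.t • S.β ^ 4 = S.γ * (S.σ * (S.β * (S.β * 1))) := by
          rw [mul_one, ← sq, ← mul_assoc, S.γ_mul_σ, smul_mul_assoc, ← pow_add]
      _ = 0 := by rw [S.σ_mul_β_mul_β, mul_zero]
  exact (smul_eq_zero.mp h).resolve_left S.t_ne_zero

theorem β_mul_β_mul_β_mul_β (z : A) : S.β * (S.β * (S.β * (S.β * z))) = 0 := by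
  rw [show S.β * (S.β * (S.β * (S.β * z))) = S.β ^ 4 * z by
    simp only [pow_succ, pow_zero, one_mul, mul_assoc], S.β_pow_four, zero_mul]

noncomputable def mulTable : Matrix (Fin 12) (Fin 12) A :=
  let b := S.basis
  !![b 0, 0, b 2, 0, b 4, 0, b 6, b 7, 0, 0, b 10, 0;
    0, b 1, 0, b 3, 0, b 5, 0, 0, b 8, b 9, 0, b 11;
    b 2, 0, b 6, 0, b 7, 0, b 10, 0, 0, 0, 0, 0;
    0, b 3, 0, b 8, 0, b 9, 0, 0, b 11, 0, 0, 0;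
    0, b 4, 0, b 7, 0, b 6 - S.ε • b 10, 0, 0, 0, b 10, 0, 0;
    b 5, 0, b 9, 0, S.t • b 8, 0, 0, S.t • b 11, 0, 0, 0, 0;
    b 6, 0, b 10, 0, 0, 0, 0, 0, 0, 0, 0, 0;
    0, b 7, 0, 0, 0, b 10, 0, 0, 0, 0, 0, 0;
    0, b 8, 0, b 11, 0, 0, 0, 0, 0, 0, 0, 0;
    b 9, 0, 0, 0, S.t • b 11, 0, 0, 0, 0, 0, 0, 0;
    b 10, 0, 0, 0, 0, 0, 0, 0, 0, 0, 0, 0;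
    0, b 11, 0, 0, 0, 0, 0, 0, 0, 0, 0, 0]

/- After `* 1` is appended every word is right-nested with a tail, so each relation is needed
only in its form `x * (y * z)`; products of paths that do not meet at a vertex vanish in the last
step. -/
theorem basis_mul_basis (i j : Fin 12) : S.basis i * S.basis j = S.mulTable i j := by
  have w : ∀ {x y v : A}, x * y = v → ∀ z, x * (y * z) = v * z := mul_mul_eq_of_mul_eq
  rw [← mul_one (S.basis i * S.basis j), ← mul_one (S.mulTable i j)]
  fin_cases i <;> fin_cases j <;>
    simp only [mulTable, S.basis_eq, Fin.reduceFinMk, Fin.zero_eta, Fin.mk_one, Fin.isValue,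
      Matrix.of_apply, Matrix.cons_val', Matrix.cons_val, Matrix.empty_val',
      Matrix.cons_val_fin_one, pow_succ, pow_zero, one_mul, mul_assoc, sub_mul, smul_mul_assoc,
      mul_sub, mul_smul_comm, zero_mul, mul_zero, smul_zero, sub_zero,
      w S.e₁_mul_e₁, w S.e₂_mul_e₂, w S.e₁_mul_e₂, w S.e₂_mul_e₁,
      w S.e₁_mul_α, w S.α_mul_e₁, w S.e₂_mul_β, w S.β_mul_e₂, w S.e₁_mul_σ, w S.σ_mul_e₂,
      w S.e₂_mul_γ, w S.γ_mul_e₁, w S.α_mul_σ, w S.β_mul_γ, w S.σ_mul_γ', w S.γ_mul_σ',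
      S.σ_mul_β_mul_β, S.γ_mul_α_mul_α, S.α_mul_α_mul_α_mul_α, S.β_mul_β_mul_β_mul_β]
  all_goals
    simp (disch := simp only [S.e₁_mul_e₁, S.e₂_mul_e₂, S.e₁_mul_α, S.α_mul_e₁, S.e₂_mul_β,
        S.β_mul_e₂, S.e₁_mul_σ, S.σ_mul_e₂, S.e₂_mul_γ, S.γ_mul_e₁]) only
      [S.mul_mul_eq_zero_of_e₁_e₂, S.mul_mul_eq_zero_of_e₂_e₁, mul_zero]

noncomputable def form : A →ₗ[K] K :=
  S.basis.coord 10 + S.ε • S.basis.coord 6 + S.t⁻¹ • S.basis.coord 11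

def gram : Matrix (Fin 12) (Fin 12) K :=
  !![0, 0, 0, 0, 0, 0, S.ε, 0, 0, 0, 1, 0;
    0, 0, 0, 0, 0, 0, 0, 0, 0, 0, 0, S.t⁻¹;
    0, 0, S.ε, 0, 0, 0, 1, 0, 0, 0, 0, 0;
    0, 0, 0, 0, 0, 0, 0, 0, S.t⁻¹, 0, 0, 0;
    0, 0, 0, 0, 0, 0, 0, 0, 0, 1, 0, 0;
    0, 0, 0, 0, 0, 0, 0, 1, 0, 0, 0, 0;
    S.ε, 0, 1, 0, 0, 0, 0, 0, 0, 0, 0, 0;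
    0, 0, 0, 0, 0, 1, 0, 0, 0, 0, 0, 0;
    0, 0, 0, S.t⁻¹, 0, 0, 0, 0, 0, 0, 0, 0;
    0, 0, 0, 0, 1, 0, 0, 0, 0, 0, 0, 0;
    1, 0, 0, 0, 0, 0, 0, 0, 0, 0, 0, 0;
    0, S.t⁻¹, 0, 0, 0, 0, 0, 0, 0, 0, 0, 0]

theorem form_basis (k : Fin 12) :
    S.form (S.basis k) = ![0, 0, 0, 0, 0, 0, S.ε, 0, 0, 0, 1, S.t⁻¹] k := by
  fin_cases k <;> simp [form]

theorem gram_comm (i j : Fin 12) : S.gram i j = S.gram j i := by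
  fin_cases i <;> fin_cases j <;> simp [gram]

theorem form_basis_mul_basis (i j : Fin 12) : S.form (S.basis i * S.basis j) = S.gram i j := by
  rw [basis_mul_basis]
  fin_cases i <;> fin_cases j <;>
    simp only [mulTable, gram, Fin.reduceFinMk, Fin.zero_eta, Fin.mk_one, Fin.isValue,
      Matrix.of_apply, Matrix.cons_val', Matrix.cons_val, Matrix.empty_val',
      Matrix.cons_val_fin_one, map_zero, map_sub, map_smul, form_basis, smul_eq_mul, mul_zero,
      mul_one, sub_self, mul_inv_cancel₀ S.t_ne_zero]

theorem form_mul_comm (u v : A) : S.form (u * v) = S.form (v * u) :=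
  map_mul_comm_of_basis S.basis (fun i j => by
    rw [form_basis_mul_basis, form_basis_mul_basis, gram_comm]) u v

theorem form_basis_mul (k : Fin 12) (y : A) :
    S.form (S.basis k * y) = ∑ j, S.basis.repr y j * S.gram k j := by
  rw [map_mul_eq_sum_right S.basis]
  simp only [form_basis_mul_basis]

theorem repr_basis_mul (k j : Fin 12) (z : A) :
    S.basis.repr (S.basis k * z) j = ∑ i, S.basis.repr z i * S.basis.repr (S.mulTable k i) j := by
  simpa [basis_mul_basis] using map_mul_eq_sum_right S.basis (S.basis.coord j) (S.basis k) z

theorem repr_mul_basis (k j : Fin 12) (z : A) :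
    S.basis.repr (z * S.basis k) j = ∑ i, S.basis.repr z i * S.basis.repr (S.mulTable i k) j := by
  simpa [basis_mul_basis] using map_mul_eq_sum_left S.basis (S.basis.coord j) (S.basis k) z

noncomputable def centerBasis : Fin 6 → A :=
  ![S.basis 0 + S.basis 1, S.basis 2 + S.basis 3, S.basis 6, S.basis 8, S.basis 10, S.basis 11]

theorem centerBasis_mem_center (i : Fin 6) : S.centerBasis i ∈ Subalgebra.center K A := by
  refine mem_center_of_basis_mul_comm S.basis fun k => ?_
  fin_cases i <;> fin_cases k <;>
    simp only [centerBasis, mulTable, add_mul, mul_add, basis_mul_basis, Fin.reduceFinMk,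
      Fin.zero_eta, Fin.mk_one, Fin.isValue, Matrix.of_apply, Matrix.cons_val', Matrix.cons_val,
      Matrix.empty_val', Matrix.cons_val_fin_one, add_zero, zero_add]

theorem mem_span_centerBasis {z : A} (hz : z ∈ Subalgebra.center K A) :
    z ∈ span K (Set.range S.centerBasis) := by
  have h0 := Subalgebra.mem_center_iff.mp hz (S.basis 0)
  have h4 := Subalgebra.mem_center_iff.mp hz (S.basis 4)
  have coord (j : Fin 12) {x y : A} (h : x = y) := congrArg (fun x => S.basis.repr x j) h
  have e4 := coord 4 h0
  have e5 := coord 5 h0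
  have e7 := coord 7 h0
  have e9 := coord 9 h0
  have f4 := coord 4 h4
  have f7 := coord 7 h4
  simp [repr_basis_mul, repr_mul_basis, Fin.sum_univ_succ, mulTable] at e4 e5 e7 e9 f4 f7
  refine (mem_span_range_iff_exists_fun K).mpr
    ⟨![S.basis.repr z 0, S.basis.repr z 2, S.basis.repr z 6, S.basis.repr z 8,
      S.basis.repr z 10, S.basis.repr z 11], ?_⟩
  conv_rhs => rw [← S.basis.sum_repr z]
  simp only [Fin.sum_univ_succ, Fin.sum_univ_zero, Fin.succ_zero_eq_one, Fin.reduceSucc,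
    centerBasis, Matrix.cons_val,
    Fin.isValue, e4, ← e5, e7, ← e9, f4, f7]
  module

theorem finrank_center (S : Lambda3Presentation K A) : finrank K (Subalgebra.center K A) = 6 := by
  have h : Subalgebra.toSubmodule (Subalgebra.center K A) = span K (Set.range S.centerBasis) :=
    le_antisymm (fun z hz => S.mem_span_centerBasis hz)
      (span_le.mpr (Set.range_subset_iff.mpr S.centerBasis_mem_center))
  rw [← Subalgebra.finrank_toSubmodule, h]
  refine finrank_span_range_of_repr_eq_ite S.basis ![0, 2, 6, 8, 10, 11] fun i j => ?_
  fin_cases i <;> fin_cases j <;> simp [centerBasis]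

theorem repr_of_sq_mem_commutatorSpan [CharP K 2] {x : A} (hx : x ^ 2 ∈ commutatorSpan K A) :
    S.basis.repr x 0 = 0 ∧ S.basis.repr x 1 = 0 ∧ S.ε * S.basis.repr x 2 ^ 2 = 0 ∧
      S.basis.repr x 3 ^ 2 = S.t * S.basis.repr x 2 ^ 2 := by
  have key : ∀ z ∈ Subalgebra.center K A,
      ∑ i, S.basis.repr x i ^ 2 * S.form (z * S.basis i ^ 2) = 0 := fun z hz => by
    let F := S.form ∘ₗ LinearMap.mulLeft K z
    have hF : ∀ u v, F (u * v) = F (v * u) := fun u v => by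
      simpa [F, mul_assoc] using map_mul_central_mul_comm S.form_mul_comm hz u v
    rw [← map_eq_zero_of_mem_commutatorSpan hF hx, map_sq_eq_sum S.basis hF]
    rfl
  have h1 := key 1 (Subalgebra.one_mem _)
  have hαβ := key _ (S.centerBasis_mem_center 1)
  have hα3 := key _ (S.centerBasis_mem_center 4)
  have hβ3 := key _ (S.centerBasis_mem_center 5)
  simp [Fin.sum_univ_succ, sq, centerBasis, add_mul, basis_mul_basis, mulTable, form_basis,
    S.t_ne_zero] at h1 hαβ hα3 hβ3
  refine ⟨hα3, hβ3, by simp [h1.symm], ?_⟩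
  field_simp [S.t_ne_zero] at hαβ
  linear_combination hαβ - S.t * S.basis.repr x 2 ^ 2 * CharTwo.two_eq_zero (R := K)

theorem eq_of_mem_kulshammerPerp {a : A} (ha : a ∈ kulshammerPerp S.form) :
    a = S.basis.repr a 6 • S.basis 6 + S.basis.repr a 8 • S.basis 8 +
      S.basis.repr a 10 • S.basis 10 + S.basis.repr a 11 • S.basis 11 := by
  have test (j : Fin 12) (hj : S.mulTable j j = 0) : ∑ i, S.basis.repr a i * S.gram j i = 0 := by
    rw [← form_basis_mul, form_mul_comm]
    exact ha _ (by rw [sq, basis_mul_basis, hj]; exact zero_mem _)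
  have h4 := test 4 rfl
  have h5 := test 5 rfl
  have h6 := test 6 rfl
  have h7 := test 7 rfl
  have h8 := test 8 rfl
  have h9 := test 9 rfl
  have h10 := test 10 rfl
  have h11 := test 11 rfl
  simp [Fin.sum_univ_succ, gram, S.t_ne_zero] at h4 h5 h6 h7 h8 h9 h10 h11
  rw [h10, zero_mul, zero_add] at h6
  conv_lhs => rw [← S.basis.sum_repr a]
  simp only [Fin.sum_univ_succ, Fin.sum_univ_zero, Fin.succ_zero_eq_one, Fin.reduceSucc,
    Fin.isValue, h4, h5, h6, h7, h8, h9, h10, h11, zero_smul, zero_add, add_zero, add_assoc]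

theorem kulshammerPerp_form_of_ε_eq_one [CharP K 2] (hε : S.ε = 1) :
    kulshammerPerp S.form = span K {S.α ^ 2, S.β ^ 2, S.α ^ 3, S.β ^ 3} := by
  have hgen : ({S.α ^ 2, S.β ^ 2, S.α ^ 3, S.β ^ 3} : Set A) =
      {S.basis 6, S.basis 8, S.basis 10, S.basis 11} := by
    simp [S.basis_eq]
  rw [hgen]
  refine subset_antisymm (fun a ha => ?_) (span_subset_kulshammerPerp fun a ha x hx => ?_)
  · rw [S.eq_of_mem_kulshammerPerp ha]
    refine add_mem (add_mem (add_mem ?_ ?_) ?_) ?_ <;>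
      exact smul_mem _ _ (subset_span (by simp))
  · obtain ⟨h0, h1, h2, h3⟩ := S.repr_of_sq_mem_commutatorSpan hx
    rw [hε, one_mul, pow_eq_zero_iff two_ne_zero] at h2
    rw [h2, zero_pow two_ne_zero, mul_zero, pow_eq_zero_iff two_ne_zero] at h3
    rcases ha with rfl | rfl | rfl | rfl <;>
      simp [form_basis_mul, Fin.sum_univ_succ, gram, h0, h1, h2, h3]

theorem sq_basis_two_add_smul_mem_commutatorSpan [CharP K 2] (hε : S.ε = 0) {m : K}
    (hm : m ^ 2 = S.t) : (S.basis 2 + m • S.basis 3) ^ 2 ∈ commutatorSpan K A := by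
  have hsq : (S.basis 2 + m • S.basis 3) ^ 2 = S.basis 4 * S.basis 5 - S.basis 5 * S.basis 4 := by
    simp [sq, add_mul, mul_add, basis_mul_basis, mulTable, hε, ← hm]
    rw [smul_smul, sub_eq_add_neg, ← neg_smul, CharTwo.neg_eq]
  exact subset_span ⟨_, _, hsq⟩

theorem kulshammerPerp_form_of_ε_eq_zero [CharP K 2] (hε : S.ε = 0) {m : K} (hm : m ^ 2 = S.t) :
    kulshammerPerp S.form = span K {S.α ^ 2 + m • S.β ^ 2, S.α ^ 3, S.β ^ 3} := by
  have hgen : ({S.α ^ 2 + m • S.β ^ 2, S.α ^ 3, S.β ^ 3} : Set A) =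
      {S.basis 6 + m • S.basis 8, S.basis 10, S.basis 11} := by
    simp [S.basis_eq]
  have hm0 : m ≠ 0 := by rintro rfl; exact S.t_ne_zero (by rw [← hm]; ring)
  rw [hgen]
  refine subset_antisymm (fun a ha => ?_) (span_subset_kulshammerPerp fun a ha x hx => ?_)
  · have htest := ha _ (S.sq_basis_two_add_smul_mem_commutatorSpan hε hm)
    rw [S.eq_of_mem_kulshammerPerp ha] at htest ⊢
    simp [add_mul, mul_add, form_basis_mul_basis, gram, hε] at htest
    have h8 : S.basis.repr a 8 = m * S.basis.repr a 6 := by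
      have e : m * (m * (S.basis.repr a 8 * S.t⁻¹)) = S.basis.repr a 8 := by
        rw [← hm]; field_simp [hm0]
      rw [← CharTwo.neg_eq (m * _)]
      linear_combination m * htest - e
    rw [h8]
    have hcomb : S.basis.repr a 6 • S.basis 6 + (m * S.basis.repr a 6) • S.basis 8 +
        S.basis.repr a 10 • S.basis 10 + S.basis.repr a 11 • S.basis 11 =
        S.basis.repr a 6 • (S.basis 6 + m • S.basis 8) + S.basis.repr a 10 • S.basis 10 +
          S.basis.repr a 11 • S.basis 11 := by
      module
    rw [hcomb]
    refine add_mem (add_mem ?_ ?_) ?_ <;> exact smul_mem _ _ (subset_span (by simp))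
  · obtain ⟨h0, h1, -, h3⟩ := S.repr_of_sq_mem_commutatorSpan hx
    have h32 : S.basis.repr x 3 = m * S.basis.repr x 2 := by
      have hsq : (S.basis.repr x 3 - m * S.basis.repr x 2) ^ 2 = 0 := by
        linear_combination h3 + S.basis.repr x 2 ^ 2 * hm + (S.t * S.basis.repr x 2 ^ 2 -
          m * S.basis.repr x 2 * S.basis.repr x 3) * CharTwo.two_eq_zero (R := K)
      exact sub_eq_zero.mp (pow_eq_zero_iff two_ne_zero |>.mp hsq)
    have e : m * (m * S.basis.repr x 2 * S.t⁻¹) = S.basis.repr x 2 := by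
      rw [← hm]; field_simp [hm0]
    rcases ha with rfl | rfl | rfl
    · simp [add_mul, form_basis_mul, Fin.sum_univ_succ, gram, h0, h32, hε]
      rw [e, CharTwo.add_self_eq_zero]
    · simp [form_basis_mul, Fin.sum_univ_succ, gram, h0]
    · simp [form_basis_mul, Fin.sum_univ_succ, gram, h1]

theorem α_β_powers_mem_center :
    S.α ^ 2 ∈ Subalgebra.center K A ∧ S.β ^ 2 ∈ Subalgebra.center K A ∧
      S.α ^ 3 ∈ Subalgebra.center K A ∧ S.β ^ 3 ∈ Subalgebra.center K A := by
  have h (i : Fin 6) : S.centerBasis i ∈ Subalgebra.center K A := S.centerBasis_mem_center i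
  simp only [centerBasis, S.basis_eq] at h
  exact ⟨h 2, h 3, h 4, h 5⟩

theorem span_α_sq_add_smul_le_center (m : K) :
    span K {S.α ^ 2 + m • S.β ^ 2, S.α ^ 3, S.β ^ 3} ≤
      Subalgebra.toSubmodule (Subalgebra.center K A) := by
  obtain ⟨h2, h3, h4, h5⟩ := S.α_β_powers_mem_center
  simp only [span_le, Set.insert_subset_iff, Set.singleton_subset_iff, SetLike.mem_coe,
    Subalgebra.mem_toSubmodule]
  exact ⟨add_mem h2 (Subalgebra.smul_mem _ h3 m), h4, h5⟩

theorem span_α_sq_le_center :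
    span K {S.α ^ 2, S.β ^ 2, S.α ^ 3, S.β ^ 3} ≤
      Subalgebra.toSubmodule (Subalgebra.center K A) := by
  simp only [span_le, Set.insert_subset_iff, Set.singleton_subset_iff, SetLike.mem_coe,
    Subalgebra.mem_toSubmodule]
  exact S.α_β_powers_mem_center

theorem finrank_span_α_sq_add_smul (m : K) :
    finrank K (span K {S.α ^ 2 + m • S.β ^ 2, S.α ^ 3, S.β ^ 3}) = 3 := by
  have hset : ({S.α ^ 2 + m • S.β ^ 2, S.α ^ 3, S.β ^ 3} : Set A) =
      Set.range ![S.basis 6 + m • S.basis 8, S.basis 10, S.basis 11] := by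
    ext
    simp only [Set.mem_insert_iff, Set.mem_singleton_iff, Set.mem_range, Fin.exists_fin_succ,
      Fin.exists_fin_zero]
    simp [S.basis_eq, eq_comm]
  rw [hset]
  refine finrank_span_range_of_repr_eq_ite S.basis ![6, 10, 11] fun i j => ?_
  fin_cases i <;> fin_cases j <;> simp

theorem finrank_span_α_sq : finrank K (span K {S.α ^ 2, S.β ^ 2, S.α ^ 3, S.β ^ 3}) = 4 := by
  have hset : ({S.α ^ 2, S.β ^ 2, S.α ^ 3, S.β ^ 3} : Set A) =
      Set.range ![S.basis 6, S.basis 8, S.basis 10, S.basis 11] := by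
    ext
    simp only [Set.mem_insert_iff, Set.mem_singleton_iff, Set.mem_range, Fin.exists_fin_succ,
      Fin.exists_fin_zero]
    simp [S.basis_eq, eq_comm]
  rw [hset]
  refine finrank_span_range_of_repr_eq_ite S.basis ![6, 8, 10, 11] fun i j => ?_
  fin_cases i <;> fin_cases j <;> simp

end Lambda3Presentation

theorem kulshammer_ideals_of_Lambda3_and_Lambda3'_general
    (K : Type*) [Field K] [CharP K 2]
    (μ l : K) (hμ0 : μ ≠ 0) (hμ1 : μ ≠ 1) (hl0 : l ≠ 0)
    -- the standard algebra Λ' = Λ₃'(μ)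
    (Λ' : Type*) [Ring Λ'] [Algebra K Λ']
    (e1' e2' α' β' σ' γ' : Λ')
    (he1' : e1' * e1' = e1') (he2' : e2' * e2' = e2')
    (h12' : e1' * e2' = 0) (h21' : e2' * e1' = 0) (hsum' : e1' + e2' = 1)
    (hα1' : e1' * α' = α') (hα2' : α' * e1' = α')
    (hβ1' : e2' * β' = β') (hβ2' : β' * e2' = β')
    (hσ1' : e1' * σ' = σ') (hσ2' : σ' * e2' = σ')
    (hγ1' : e2' * γ' = γ') (hγ2' : γ' * e1' = γ')
    (r1' : α' ^ 2 = σ' * γ') (r2' : μ • β' ^ 2 = γ' * σ')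
    (r3' : γ' * α' = β' * γ') (r4' : σ' * β' = α' * σ')
    (b' : Module.Basis (Fin 12) K Λ')
    (hb0' : b' 0 = e1') (hb1' : b' 1 = e2') (hb2' : b' 2 = α') (hb3' : b' 3 = β')
    (hb4' : b' 4 = σ') (hb5' : b' 5 = γ') (hb6' : b' 6 = α' ^ 2) (hb7' : b' 7 = α' * σ')
    (hb8' : b' 8 = β' ^ 2) (hb9' : b' 9 = γ' * α') (hb10' : b' 10 = α' ^ 3)
    (hb11' : b' 11 = β' ^ 3)
    -- the nonstandard algebra Λ = Λ₃(λ)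
    (Λ : Type*) [Ring Λ] [Algebra K Λ]
    (e1 e2 α β σ γ : Λ)
    (he1 : e1 * e1 = e1) (he2 : e2 * e2 = e2)
    (h12 : e1 * e2 = 0) (h21 : e2 * e1 = 0) (hsum : e1 + e2 = 1)
    (hα1 : e1 * α = α) (hα2 : α * e1 = α)
    (hβ1 : e2 * β = β) (hβ2 : β * e2 = β)
    (hσ1 : e1 * σ = σ) (hσ2 : σ * e2 = σ)
    (hγ1 : e2 * γ = γ) (hγ2 : γ * e1 = γ)
    (r0 : α ^ 4 = 0) (r0' : γ * α ^ 2 = 0) (r0'' : α ^ 2 * σ = 0)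
    (r1 : α ^ 2 = σ * γ + α ^ 3) (r2 : l • β ^ 2 = γ * σ)
    (r3 : γ * α = β * γ) (r4 : σ * β = α * σ)
    (b : Module.Basis (Fin 12) K Λ)
    (hb0 : b 0 = e1) (hb1 : b 1 = e2) (hb2 : b 2 = α) (hb3 : b 3 = β)
    (hb4 : b 4 = σ) (hb5 : b 5 = γ) (hb6 : b 6 = α ^ 2) (hb7 : b 7 = α * σ)
    (hb8 : b 8 = β ^ 2) (hb9 : b 9 = γ * α) (hb10 : b 10 = α ^ 3) (hb11 : b 11 = β ^ 3)
    -- the square root of μ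
    (m : K) (hm : m ^ 2 = μ) :
    let Ψ' : Λ' →ₗ[K] K := b'.coord 10 + μ⁻¹ • b'.coord 11
    let Ψ : Λ →ₗ[K] K := b.coord 10 + b.coord 6 + l⁻¹ • b.coord 11
    let KA' : Submodule K Λ' := Submodule.span K {x : Λ' | ∃ u v : Λ', x = u * v - v * u}
    let KA : Submodule K Λ := Submodule.span K {x : Λ | ∃ u v : Λ, x = u * v - v * u}
    let I' : Submodule K Λ' := Submodule.span K {α' ^ 2 + m • β' ^ 2, α' ^ 3, β' ^ 3}
    let I : Submodule K Λ := Submodule.span K {α ^ 2, β ^ 2, α ^ 3, β ^ 3}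
    {a : Λ' | ∀ x : Λ', x ^ 2 ∈ KA' → Ψ' (a * x) = 0} = (I' : Set Λ') ∧
    Module.finrank K (Subalgebra.center K Λ') = 6 ∧
    Module.finrank K I' = 3 ∧
    {a : Λ | ∀ x : Λ, x ^ 2 ∈ KA → Ψ (a * x) = 0} = (I : Set Λ) ∧
    Module.finrank K (Subalgebra.center K Λ) = 6 ∧
    Module.finrank K I = 4 ∧
    ¬ ∃ φ : Subalgebra.center K Λ' ≃ₐ[K] Subalgebra.center K Λ,
        ∀ z : Subalgebra.center K Λ', ((z : Λ') ∈ I' ↔ ((φ z : Λ) ∈ I)) := by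
  intro Ψ' Ψ KA' KA I' I
  obtain ⟨r0₁', r0₂', r0₃'⟩ := nilpotency_relations_of_ne_one hμ1 r1' r2' r3' r4'
  let S' : Lambda3Presentation K Λ' :=
    ⟨e1', e2', α', β', σ', γ', μ, 0, hμ0, he1', he2', h12', h21', hsum', hα1', hα2', hβ1', hβ2',
      hσ1', hσ2', hγ1', hγ2', by rw [zero_smul, sub_zero, r1'], r2'.symm, r3', r4', r0₃', r0₁',
      r0₂', b',
      by ext i; fin_cases i <;> assumption⟩
  let S : Lambda3Presentation K Λ :=
    ⟨e1, e2, α, β, σ, γ, l, 1, hl0, he1, he2, h12, h21, hsum, hα1, hα2, hβ1, hβ2,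
      hσ1, hσ2, hγ1, hγ2, by rw [one_smul, r1, add_sub_cancel_right], r2.symm, r3, r4, r0, r0'',
      r0', b,
      by ext i; fin_cases i <;> assumption⟩
  have hΨ' : Ψ' = S'.form := by simp [Ψ', Lambda3Presentation.form, S']
  have hΨ : Ψ = S.form := by simp [Ψ, Lambda3Presentation.form, S]
  refine ⟨hΨ' ▸ S'.kulshammerPerp_form_of_ε_eq_zero rfl hm, S'.finrank_center,
    S'.finrank_span_α_sq_add_smul m, hΨ ▸ S.kulshammerPerp_form_of_ε_eq_one rfl, S.finrank_center,
    S.finrank_span_α_sq, ?_⟩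
  rintro ⟨φ, hφ⟩
  have h := finrank_eq_of_linearEquiv_of_le φ.toLinearEquiv (S'.span_α_sq_add_smul_le_center m)
    S.span_α_sq_le_center hφ
  rw [S'.finrank_span_α_sq_add_smul, S.finrank_span_α_sq] at h
  omega

/-- (Char 2, `λ, μ ∉ {0,1}`.) The first Külshammer ideal of the standard algebra
`Λ₃'(μ)` equals `span{α² + √μ·β², α³, β³}` (codimension 3 in the 6-dimensional
center), whereas for the nonstandard algebra `Λ₃(λ)` it equals
`span{α², β², α³, β³}` (codimension 2 in the 6-dimensional center); hence no
isomorphism of the centers carries one Külshammer ideal onto the other. -/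
theorem kulshammer_ideals_of_Lambda3_and_Lambda3'
    (K : Type*) [Field K] [IsAlgClosed K] [CharP K 2]
    (μ l : K) (hμ0 : μ ≠ 0) (hμ1 : μ ≠ 1) (hl0 : l ≠ 0) (hl1 : l ≠ 1)
    -- the standard algebra Λ' = Λ₃'(μ)
    (Λ' : Type*) [Ring Λ'] [Algebra K Λ']
    (e1' e2' α' β' σ' γ' : Λ')
    (he1' : e1' * e1' = e1') (he2' : e2' * e2' = e2')
    (h12' : e1' * e2' = 0) (h21' : e2' * e1' = 0) (hsum' : e1' + e2' = 1)
    (hα1' : e1' * α' = α') (hα2' : α' * e1' = α')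
    (hβ1' : e2' * β' = β') (hβ2' : β' * e2' = β')
    (hσ1' : e1' * σ' = σ') (hσ2' : σ' * e2' = σ')
    (hγ1' : e2' * γ' = γ') (hγ2' : γ' * e1' = γ')
    (r1' : α' ^ 2 = σ' * γ') (r2' : μ • β' ^ 2 = γ' * σ')
    (r3' : γ' * α' = β' * γ') (r4' : σ' * β' = α' * σ')
    (b' : Module.Basis (Fin 12) K Λ')
    (hb0' : b' 0 = e1') (hb1' : b' 1 = e2') (hb2' : b' 2 = α') (hb3' : b' 3 = β')
    (hb4' : b' 4 = σ') (hb5' : b' 5 = γ') (hb6' : b' 6 = α' ^ 2) (hb7' : b' 7 = α' * σ')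
    (hb8' : b' 8 = β' ^ 2) (hb9' : b' 9 = γ' * α') (hb10' : b' 10 = α' ^ 3)
    (hb11' : b' 11 = β' ^ 3)
    -- the nonstandard algebra Λ = Λ₃(λ)
    (Λ : Type*) [Ring Λ] [Algebra K Λ]
    (e1 e2 α β σ γ : Λ)
    (he1 : e1 * e1 = e1) (he2 : e2 * e2 = e2)
    (h12 : e1 * e2 = 0) (h21 : e2 * e1 = 0) (hsum : e1 + e2 = 1)
    (hα1 : e1 * α = α) (hα2 : α * e1 = α)
    (hβ1 : e2 * β = β) (hβ2 : β * e2 = β)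
    (hσ1 : e1 * σ = σ) (hσ2 : σ * e2 = σ)
    (hγ1 : e2 * γ = γ) (hγ2 : γ * e1 = γ)
    (r0 : α ^ 4 = 0) (r0' : γ * α ^ 2 = 0) (r0'' : α ^ 2 * σ = 0)
    (r1 : α ^ 2 = σ * γ + α ^ 3) (r2 : l • β ^ 2 = γ * σ)
    (r3 : γ * α = β * γ) (r4 : σ * β = α * σ)
    (b : Module.Basis (Fin 12) K Λ)
    (hb0 : b 0 = e1) (hb1 : b 1 = e2) (hb2 : b 2 = α) (hb3 : b 3 = β)
    (hb4 : b 4 = σ) (hb5 : b 5 = γ) (hb6 : b 6 = α ^ 2) (hb7 : b 7 = α * σ)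
    (hb8 : b 8 = β ^ 2) (hb9 : b 9 = γ * α) (hb10 : b 10 = α ^ 3) (hb11 : b 11 = β ^ 3)
    -- the square root of μ
    (m : K) (hm : m ^ 2 = μ) :
    let Ψ' : Λ' →ₗ[K] K := b'.coord 10 + μ⁻¹ • b'.coord 11
    let Ψ : Λ →ₗ[K] K := b.coord 10 + b.coord 6 + l⁻¹ • b.coord 11
    let KA' : Submodule K Λ' := Submodule.span K {x : Λ' | ∃ u v : Λ', x = u * v - v * u}
    let KA : Submodule K Λ := Submodule.span K {x : Λ | ∃ u v : Λ, x = u * v - v * u}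
    let I' : Submodule K Λ' := Submodule.span K {α' ^ 2 + m • β' ^ 2, α' ^ 3, β' ^ 3}
    let I : Submodule K Λ := Submodule.span K {α ^ 2, β ^ 2, α ^ 3, β ^ 3}
    {a : Λ' | ∀ x : Λ', x ^ 2 ∈ KA' → Ψ' (a * x) = 0} = (I' : Set Λ') ∧
    Module.finrank K (Subalgebra.center K Λ') = 6 ∧
    Module.finrank K I' = 3 ∧
    {a : Λ | ∀ x : Λ, x ^ 2 ∈ KA → Ψ (a * x) = 0} = (I : Set Λ) ∧
    Module.finrank K (Subalgebra.center K Λ) = 6 ∧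
    Module.finrank K I = 4 ∧
    ¬ ∃ φ : Subalgebra.center K Λ' ≃ₐ[K] Subalgebra.center K Λ,
        ∀ z : Subalgebra.center K Λ', ((z : Λ') ∈ I' ↔ ((φ z : Λ) ∈ I)) :=
  kulshammer_ideals_of_Lambda3_and_Lambda3'_general K μ l hμ0 hμ1 hl0 Λ' e1' e2' α' β' σ' γ' he1'
    he2' h12' h21' hsum' hα1' hα2' hβ1' hβ2' hσ1' hσ2' hγ1' hγ2' r1' r2' r3' r4' b' hb0' hb1' hb2'
    hb3' hb4' hb5' hb6' hb7' hb8' hb9' hb10' hb11' Λ e1 e2 α β σ γ he1 he2 h12 h21 hsum hα1 hα2 hβ1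
    hβ2 hσ1 hσ2 hγ1 hγ2 r0 r0' r0'' r1 r2 r3 r4 b hb0 hb1 hb2 hb3 hb4 hb5 hb6 hb7 hb8 hb9 hb10 hb11
    m hm
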